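/- Let L_n ⊆ S_n be a zigzag language with n ≥ 1. For the last permutation π of the sequence J(L_n), we have s_{n,n}^π = 1. -/

import Mathlib

/-!
Shared definitions: permutations in one-line notation as lists of naturals,
deletion `p`, insertion `c_i`, zigzag languages, the Gray code sequence `J(L_n)`,
jumps, minimal jumps, the auxiliary sequences `s_n^π`, Algorithm M,
vincular pattern containment and 2-clumped permutations.
-/

/-- `S_n`: permutations of `{1,…,n}` in one-line notation, as lists of naturals. -/
def SymmList (n : ℕ) : Set (List ℕ) := {l | List.Perm l (List.range' 1 n)}

/-- The identity permutation `id_n = 1 2 ⋯ n`. -/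
def idPerm (n : ℕ) : List ℕ := List.range' 1 n

/-- `p(π)`: delete the largest entry `n = π.length` from the permutation `π ∈ S_n`. -/
def pdel (l : List ℕ) : List ℕ := l.erase l.length

/-- `c_i(π)`: insert the new largest value `π.length + 1` at (1-indexed) position `i`. -/
def cins (i : ℕ) (l : List ℕ) : List ℕ :=
  l.take (i - 1) ++ (l.length + 1) :: l.drop (i - 1)

/-- Zigzag languages of permutations: `L_0 = {ε}` is a zigzag language, and
`L ⊆ S_{n+1}` is a zigzag language if `p(L)` is a zigzag language and
`c_1(π), c_{n+1}(π) ∈ L` for every `π ∈ p(L)`. -/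
inductive IsZigzag : ℕ → Set (List ℕ) → Prop
  | zero : IsZigzag 0 {[]}
  | succ (n : ℕ) (L : Set (List ℕ)) :
      L ⊆ SymmList (n + 1) →
      IsZigzag n (pdel '' L) →
      (∀ l ∈ pdel '' L, cins 1 l ∈ L ∧ cins (n + 1) l ∈ L) →
      IsZigzag (n + 1) L

/-- `→c(π)`: the sequence of those `c_1(π),…,c_n(π)` lying in `L`,
in increasing order of the insertion position. -/
noncomputable def cSeq (L : Set (List ℕ)) (n : ℕ) (l : List ℕ) : List (List ℕ) :=
  ((List.range' 1 n).map (fun i => cins i l)).filter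
    (fun x => @decide (x ∈ L) (Classical.propDecidable _))

/-- The Gray code sequence `J(L_n)` of a language `L ⊆ S_n`:
`J(L_0) = ε`, and `J(L_{n+1})` is obtained from `J(L_n)` (for the language
`p(L)`) by replacing its entries alternately by `←c(π)` (the reverse of
`→c(π)`) and `→c(π)`. -/
noncomputable def Jseq : ℕ → Set (List ℕ) → List (List ℕ)
  | 0, _ => [[]]
  | (n + 1), L =>
      (((Jseq n (pdel '' L)).mapIdx
        (fun k π => if k % 2 = 0 then (cSeq L (n + 1) π).reverse
                    else cSeq L (n + 1) π)).flatten)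

/-- `ρ` is obtained from `π` by a right jump of the value `v` by `d` steps. -/
def RightJump (π ρ : List ℕ) (v d : ℕ) : Prop :=
  0 < d ∧ ∃ A B C : List ℕ, B.length = d ∧ (∀ x ∈ B, x < v) ∧
    π = A ++ v :: (B ++ C) ∧ ρ = A ++ (B ++ v :: C)

/-- `ρ` is obtained from `π` by a left jump of the value `v` by `d` steps. -/
def LeftJump (π ρ : List ℕ) (v d : ℕ) : Prop := RightJump ρ π v d

/-- A right jump that is minimal with respect to `L`: every right jump of the
same value by fewer steps yields a permutation not in `L`. -/
def MinimalRightJump (L : Set (List ℕ)) (π ρ : List ℕ) (v d : ℕ) : Prop :=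
  RightJump π ρ v d ∧ ∀ d' ρ', d' < d → RightJump π ρ' v d' → ρ' ∉ L

/-- A left jump that is minimal with respect to `L`. -/
def MinimalLeftJump (L : Set (List ℕ)) (π ρ : List ℕ) (v d : ℕ) : Prop :=
  LeftJump π ρ v d ∧ ∀ d' ρ', d' < d → LeftJump π ρ' v d' → ρ' ∉ L

/-- The auxiliary sequence `s_n^π` of a permutation `π` occurring in `J(L_n)`,
as a function of the index `i ∈ {1,…,n}` (value `0` outside this range). -/
noncomputable def sVec : ℕ → Set (List ℕ) → List ℕ → ℕ → ℕ
  | 0, _, _, _ => 0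
  | 1, _, _, i => if i = 1 then 1 else 0
  | (n + 2), L, π, i =>
      let L' := pdel '' L
      let π' := pdel π
      let cbar := if ((Jseq (n + 1) L').idxOf π') % 2 = 0
                  then (cSeq L (n + 2) π').reverse else cSeq L (n + 2) π'
      if cbar.getLast? = some π then
        (if i ≤ n then sVec (n + 1) L' π' i
         else if i = n + 1 then n + 1
         else if i = n + 2 then sVec (n + 1) L' π' (n + 1) else 0)
      else
        (if i ≤ n + 1 then sVec (n + 1) L' π' i
         else if i = n + 2 then n + 2 else 0)

/-- `j` is at the first position of `l`, or the entry immediately left of `j`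
in `l` is larger than `j`. -/
def AtLeftTurn (l : List ℕ) (j : ℕ) : Prop :=
  ∃ A B : List ℕ, l = A ++ j :: B ∧ (A = [] ∨ ∃ x, A.getLast? = some x ∧ j < x)

/-- `j` is at the last position of `l`, or the entry immediately right of `j`
in `l` is larger than `j`. -/
def AtRightTurn (l : List ℕ) (j : ℕ) : Prop :=
  ∃ A B : List ℕ, l = A ++ j :: B ∧ (B = [] ∨ ∃ x, B.head? = some x ∧ j < x)

/-- `j` is not at the first position of `l`, and the entry immediately left of
`j` in `l` is smaller than `j`. -/
def SmallerLeftNeighbor (l : List ℕ) (j : ℕ) : Prop :=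
  ∃ A B : List ℕ, ∃ x, l = A ++ j :: B ∧ A.getLast? = some x ∧ x < j

/-- `j` is not at the last position of `l`, and the entry immediately right of
`j` in `l` is smaller than `j`. -/
def SmallerRightNeighbor (l : List ℕ) (j : ℕ) : Prop :=
  ∃ A B : List ℕ, ∃ x, l = A ++ j :: B ∧ B.head? = some x ∧ x < j

/-- A state of Algorithm M: the current permutation `π` and the auxiliary
arrays `o` and `s`; `o j = false` encodes direction `L` (left) and
`o j = true` encodes `R` (right). -/
structure MState where
  perm : List ℕ
  o : ℕ → Bool
  s : ℕ → ℕ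

/-- The initial state of Algorithm M (step M1): `π = id_n`, `o_j = L`, `s_j = j`. -/
def MInit (n : ℕ) : MState := ⟨idPerm n, fun _ => false, fun j => j⟩

/-- One iteration (steps M3–M5) of Algorithm M on a language `L ⊆ S_n`:
with `j := s_n ≠ 1`, the permutation jumps minimally in the direction `o_j`
(step M4), and the arrays `o`, `s` are updated as in step M5. -/
def MStep (L : Set (List ℕ)) (n : ℕ) (σ σ' : MState) : Prop :=
  σ.s n ≠ 1 ∧
  σ'.perm ∈ L ∧
  ((σ.o (σ.s n) = false ∧ ∃ d, MinimalLeftJump L σ.perm σ'.perm (σ.s n) d) ∨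
   (σ.o (σ.s n) = true ∧ ∃ d, MinimalRightJump L σ.perm σ'.perm (σ.s n) d)) ∧
  (((σ.o (σ.s n) = false ∧ AtLeftTurn σ'.perm (σ.s n)) ∨
    (σ.o (σ.s n) = true ∧ AtRightTurn σ'.perm (σ.s n))) →
      σ'.o = Function.update σ.o (σ.s n) (!σ.o (σ.s n)) ∧
      σ'.s = Function.update (Function.update (Function.update σ.s n n) (σ.s n)
               ((Function.update σ.s n n) (σ.s n - 1))) (σ.s n - 1) (σ.s n - 1)) ∧
  (¬ ((σ.o (σ.s n) = false ∧ AtLeftTurn σ'.perm (σ.s n)) ∨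
      (σ.o (σ.s n) = true ∧ AtRightTurn σ'.perm (σ.s n))) →
      σ'.o = σ.o ∧ σ'.s = Function.update σ.s n n)

/-- `π` contains the vincular pattern `pat` whose marked adjacent pair starts
at (0-indexed) position `k` of `pat`. -/
def ContainsVincular (π pat : List ℕ) (k : ℕ) : Prop :=
  ∃ f : ℕ → ℕ, StrictMonoOn f (Set.Iio pat.length) ∧
    (∀ i < pat.length, f i < π.length) ∧
    f (k + 1) = f k + 1 ∧
    (∀ i < pat.length, ∀ j < pat.length,
      (pat.getD i 0 < pat.getD j 0 ↔ π.getD (f i) 0 < π.getD (f j) 0))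

/-- 2-clumped permutations: those avoiding the vincular patterns
`3(51)24`, `3(51)42`, `24(51)3` and `42(51)3`. -/
def TwoClumped (π : List ℕ) : Prop :=
  ¬ ContainsVincular π [3, 5, 1, 2, 4] 1 ∧ ¬ ContainsVincular π [3, 5, 1, 4, 2] 1 ∧
  ¬ ContainsVincular π [2, 4, 5, 1, 3] 2 ∧ ¬ ContainsVincular π [4, 2, 5, 1, 3] 2

/-- `S'_n`: the set of 2-clumped permutations in `S_n`. -/
def SClump (n : ℕ) : Set (List ℕ) := {l ∈ SymmList n | TwoClumped l}

/-- `B_n`: the permutations obtained from `1` by repeatedly inserting the new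
largest value at the first or the last position. -/
def Bset : ℕ → Set (List ℕ)
  | 0 => {[]}
  | 1 => {[1]}
  | (n + 2) => {l | ∃ π ∈ Bset (n + 1), l = cins 1 π ∨ l = cins (n + 2) π}

/-! The last permutation of `J(L_{n+1})` is the last entry of the block `c̄(π')` of the last
permutation `π'` of `J(L_n)`; this block is nonempty because `c_1(π') ∈ L_{n+1}`. As `J(L_n)` has
no repetitions, `π'` sits at index `|J(L_n)| - 1`, so the block that the definition of `s` consults
is this same block, and `s_{n+1,n+1}^π = s_{n,n}^{π'} = 1` by induction. -/

theorem List.getLast?_flatten_mapIdx {α β : Type*} {l : List α} {f : ℕ → α → List β} {a : α}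
    (ha : l.getLast? = some a) (hf : f (l.length - 1) a ≠ []) :
    (l.mapIdx f).flatten.getLast? = (f (l.length - 1) a).getLast? := by
  obtain ⟨l', rfl⟩ := List.getLast?_eq_some_iff.mp ha
  simp only [List.length_append, List.length_singleton, Nat.add_sub_cancel] at hf ⊢
  obtain ⟨b, hb⟩ := Option.isSome_iff_exists.mp (List.getLast?_isSome.mpr hf)
  simp [List.mapIdx_append, hb]

theorem List.Nodup.idxOf_of_getLast? {α : Type*} [BEq α] [LawfulBEq α] {l : List α} {a : α}
    (hl : l.Nodup) (ha : l.getLast? = some a) : l.idxOf a = l.length - 1 := by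
  obtain ⟨l', rfl⟩ := List.getLast?_eq_some_iff.mp ha
  have ha' : a ∉ l' := fun h => List.disjoint_of_nodup_append hl h (List.mem_singleton_self a)
  simp [List.idxOf_append_of_notMem ha']

lemma length_cins (i : ℕ) (σ : List ℕ) : (cins i σ).length = σ.length + 1 := by
  simp only [cins, List.length_append, List.length_take, List.length_cons, List.length_drop]
  omega

lemma pdel_cins (i : ℕ) {σ : List ℕ} (hσ : σ.length + 1 ∉ σ) : pdel (cins i σ) = σ := by
  have hv : σ.length + 1 ∉ σ.take (i - 1) := fun h => hσ (List.take_subset _ _ h)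
  rw [pdel, length_cins, cins, List.erase_append_right _ hv, List.erase_cons_head,
    List.take_append_drop]

lemma idxOf_cins {i : ℕ} {σ : List ℕ} (hσ : σ.length + 1 ∉ σ) (hi : 1 ≤ i)
    (hi' : i ≤ σ.length + 1) : (cins i σ).idxOf (σ.length + 1) = i - 1 := by
  have hv : σ.length + 1 ∉ σ.take (i - 1) := fun h => hσ (List.take_subset _ _ h)
  rw [cins, List.idxOf_append_of_notMem hv, List.idxOf_cons_self, List.length_take]
  omega

lemma cins_injOn (σ : List ℕ) (hσ : σ.length + 1 ∉ σ) :
    Set.InjOn (cins · σ) (Set.Icc 1 (σ.length + 1)) := by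
  rintro i ⟨hi, hi'⟩ j ⟨hj, hj'⟩ hij
  have := congrArg (List.idxOf (σ.length + 1)) (show cins i σ = cins j σ from hij)
  rw [idxOf_cins hσ hi hi', idxOf_cins hσ hj hj'] at this
  omega

lemma length_eq_of_mem_symmList {m : ℕ} {σ : List ℕ} (hσ : σ ∈ SymmList m) : σ.length = m :=
  (List.Perm.length_eq hσ).trans (List.length_range' ..)

lemma succ_length_notMem_of_mem_symmList {m : ℕ} {σ : List ℕ} (hσ : σ ∈ SymmList m) :
    σ.length + 1 ∉ σ := by
  rw [List.Perm.mem_iff hσ, List.mem_range', length_eq_of_mem_symmList hσ]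
  omega

section cSeq

variable {L : Set (List ℕ)} {n : ℕ} {σ x : List ℕ}

lemma mem_cSeq : x ∈ cSeq L n σ ↔ x ∈ L ∧ ∃ i ∈ List.range' 1 n, cins i σ = x := by
  simp [cSeq, and_comm]

lemma cins_one_mem_cSeq (h : cins 1 σ ∈ L) (hn : 1 ≤ n) : cins 1 σ ∈ cSeq L n σ :=
  mem_cSeq.mpr ⟨h, 1, List.mem_range'.mpr ⟨0, hn, rfl⟩, rfl⟩

lemma pdel_of_mem_cSeq (hσ : σ.length + 1 ∉ σ) (hx : x ∈ cSeq L n σ) : pdel x = σ := by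
  obtain ⟨-, i, -, rfl⟩ := mem_cSeq.mp hx
  exact pdel_cins i hσ

lemma nodup_cSeq (hσ : σ.length + 1 ∉ σ) (hn : n ≤ σ.length + 1) : (cSeq L n σ).Nodup := by
  refine ((List.nodup_range' (s := 1) (n := n)).map_on fun i hi j hj hij => ?_).filter _
  rw [List.mem_range'_1] at hi hj
  exact cins_injOn σ hσ ⟨hi.1, by omega⟩ ⟨hj.1, by omega⟩ hij

end cSeq

/-- The block `c̄(π)` replacing the entry `π` at index `k` of `J(L_{n-1})` in `J(L_n)`. -/
noncomputable def cBar (L : Set (List ℕ)) (n k : ℕ) (σ : List ℕ) : List (List ℕ) :=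
  if k % 2 = 0 then (cSeq L n σ).reverse else cSeq L n σ

section cBar

variable {L : Set (List ℕ)} {n k : ℕ} {σ x : List ℕ}

@[simp]
lemma mem_cBar : x ∈ cBar L n k σ ↔ x ∈ cSeq L n σ := by
  unfold cBar
  split_ifs <;> simp

@[simp]
lemma cBar_eq_nil : cBar L n k σ = [] ↔ cSeq L n σ = [] := by
  unfold cBar
  split_ifs <;> simp

lemma nodup_cBar (hσ : σ.length + 1 ∉ σ) (hn : n ≤ σ.length + 1) : (cBar L n k σ).Nodup := by
  unfold cBar
  split_ifs
  exacts [List.nodup_reverse.mpr (nodup_cSeq hσ hn), nodup_cSeq hσ hn]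

end cBar

lemma Jseq_succ (n : ℕ) (L : Set (List ℕ)) :
    Jseq (n + 1) L = ((Jseq n (pdel '' L)).mapIdx (cBar L (n + 1))).flatten := by
  rw [Jseq]
  rfl

lemma sVec_succ_succ_self (n : ℕ) (L : Set (List ℕ)) (π : List ℕ) :
    sVec (n + 2) L π (n + 2) =
      if (cBar L (n + 2) ((Jseq (n + 1) (pdel '' L)).idxOf (pdel π)) (pdel π)).getLast? = some π
      then sVec (n + 1) (pdel '' L) (pdel π) (n + 1) else n + 2 := by
  simp only [sVec, cBar]
  split_ifs <;> omega

namespace IsZigzag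

variable {n : ℕ} {L : Set (List ℕ)}

lemma subset_symmList (hL : IsZigzag n L) : L ⊆ SymmList n := by
  cases hL with
  | zero => rintro _ rfl; exact List.Perm.refl _
  | succ _ _ hsub _ _ => exact hsub

lemma pdel_image (hL : IsZigzag (n + 1) L) : IsZigzag n (pdel '' L) := by
  cases hL with
  | succ _ _ _ hL' _ => exact hL'

lemma mem_of_mem_Jseq (hL : IsZigzag n L) {π : List ℕ} (hπ : π ∈ Jseq n L) : π ∈ L := by
  cases hL with
  | zero => simpa [Jseq] using hπ
  | succ n L _ _ _ =>
    obtain ⟨b, hb, hπb⟩ := List.mem_flatten.mp ((Jseq_succ n L) ▸ hπ)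
    obtain ⟨k, hk, rfl⟩ := List.mem_mapIdx.mp hb
    exact (mem_cSeq.mp (mem_cBar.mp hπb)).1

lemma fresh_of_mem_Jseq (hL : IsZigzag n L) {σ : List ℕ} (hσ : σ ∈ Jseq n L) :
    σ.length + 1 ∉ σ :=
  succ_length_notMem_of_mem_symmList (hL.subset_symmList (hL.mem_of_mem_Jseq hσ))

lemma nodup_Jseq (hL : IsZigzag n L) : (Jseq n L).Nodup := by
  induction hL with
  | zero => simp [Jseq]
  | succ n L _ hL' _ ih =>
    have hfresh : ∀ σ ∈ Jseq n (pdel '' L), σ.length + 1 ∉ σ := fun σ => hL'.fresh_of_mem_Jseq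
    have hlen : ∀ σ ∈ Jseq n (pdel '' L), n + 1 ≤ σ.length + 1 := fun σ hσ => by
      rw [length_eq_of_mem_symmList (hL'.subset_symmList (hL'.mem_of_mem_Jseq hσ))]
    rw [Jseq_succ, List.nodup_flatten]
    constructor
    · intro b hb
      obtain ⟨k, hk, rfl⟩ := List.mem_mapIdx.mp hb
      exact nodup_cBar (hfresh _ (List.getElem_mem _)) (hlen _ (List.getElem_mem _))
    · -- blocks of distinct entries are disjoint, since `p` recovers the entry from a block member
      rw [List.pairwise_iff_getElem]
      intro i j hi hj hij x hxi hxj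
      simp only [List.getElem_mapIdx, mem_cBar] at hxi hxj
      have hi' : i < (Jseq n (pdel '' L)).length := by simpa using hi
      have hj' : j < (Jseq n (pdel '' L)).length := by simpa using hj
      have := (pdel_of_mem_cSeq (hfresh _ (List.getElem_mem hi')) hxi).symm.trans
        (pdel_of_mem_cSeq (hfresh _ (List.getElem_mem hj')) hxj)
      exact hij.ne ((ih.getElem_inj_iff).mp this)

lemma cSeq_ne_nil (hL : IsZigzag (n + 1) L) {σ : List ℕ} (hσ : σ ∈ pdel '' L) :
    cSeq L (n + 1) σ ≠ [] := by
  cases hL with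
  | succ _ _ _ _ hcl => exact List.ne_nil_of_mem (cins_one_mem_cSeq (hcl σ hσ).1 (by omega))

lemma getLast?_Jseq_succ (hL : IsZigzag (n + 1) L) {σ : List ℕ}
    (hσ : (Jseq n (pdel '' L)).getLast? = some σ) :
    (Jseq (n + 1) L).getLast? = (cBar L (n + 1) ((Jseq n (pdel '' L)).idxOf σ) σ).getLast? := by
  have hL' := hL.pdel_image
  rw [hL'.nodup_Jseq.idxOf_of_getLast? hσ, Jseq_succ]
  refine List.getLast?_flatten_mapIdx hσ ?_
  rw [Ne, cBar_eq_nil]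
  exact hL.cSeq_ne_nil (hL'.mem_of_mem_Jseq (List.mem_of_getLast? hσ))

end IsZigzag

/-- Let `L_n ⊆ S_n` be a zigzag language with `n ≥ 1`. For the
last permutation `π` of the sequence `J(L_n)` we have `s_{n,n}^π = 1`. -/
theorem sVec_of_last (n : ℕ) (hn : 1 ≤ n) (L : Set (List ℕ)) (hL : IsZigzag n L)
    (π : List ℕ) (hπ : (Jseq n L).getLast? = some π) :
    sVec n L π n = 1 := by
  induction hL generalizing π with
  | zero => omega
  | succ n L hsub hL' hcl ih =>
    rcases n with _ | m
    · simp [sVec]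
    obtain ⟨σ, hσ⟩ : ∃ σ, (Jseq (m + 1) (pdel '' L)).getLast? = some σ := by
      refine Option.isSome_iff_exists.mp (List.getLast?_isSome.mpr fun h => ?_)
      rw [Jseq_succ, h] at hπ
      simp at hπ
    have hL := IsZigzag.succ _ L hsub hL' hcl
    have hπσ := (hL.getLast?_Jseq_succ hσ).symm.trans hπ
    have hpdel : pdel π = σ := pdel_of_mem_cSeq
      (hL'.fresh_of_mem_Jseq (List.mem_of_getLast? hσ)) (mem_cBar.mp (List.mem_of_getLast? hπσ))
    rw [sVec_succ_succ_self, hpdel, if_pos hπσ]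
    exact ih (by omega) σ hσ
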